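/- arXiv:1906.07747 — 4 statements merged into one kernel-verified Lean document; each statement's English description precedes it below -/
import Mathlib

section
/- Let G = (⟨a₁,a₂⟩ × ⟨a₃,a₄⟩) ⋊ ⟨b⟩ with the A₄-type action on each Klein factor (n = 2 case of the paper's group, |G| = 48). Set y₁ = a₁b, y₂ = b, y₃ = a₃b², y₄ = b²a₄a₁, where b²a₃b = a₄. Then y₁y₂y₃y₄ = 1, each yᵢ has order 3, and ⟨y₁, y₂, y₃, y₄⟩ = G. -/
/-!
Each `yᵢ` has the form `v * b` or `v * b⁻¹` (up to conjugation) with `v` in a Klein four-group on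
which conjugation by `b` acts as in `A₄ = V₄ ⋊ C₃`, and every element of `A₄` outside `V₄` has
order 3. For `y₁` and `y₃` the Klein groups are `⟨a₁, a₂⟩` and `⟨a₃, a₄⟩`; for `y₄` it is the
diagonal `⟨a₄a₁, a₃a₂⟩`. The product relation is a direct computation with `b²a₃b = a₄`, and
`a₁, …, a₄, b` are recovered from the `yᵢ`.
-/

section

variable {G : Type*} [Group G]

theorem orderOf_mul_comm (a b : G) : orderOf (a * b) = orderOf (b * a) := by
  simpa [mul_assoc] using (MulAut.conj a).orderOf_eq (b * a)

/-- The relations of `A₄ = V₄ ⋊ C₃` with `V₄ = ⟨x, y⟩` and `C₃ = ⟨b⟩`. -/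
structure IsA4Triple (x y b : G) : Prop where
  left_sq : x ^ 2 = 1
  right_sq : y ^ 2 = 1
  commute : Commute x y
  cube : b ^ 3 = 1
  conj_left : b * x * b⁻¹ = y
  conj_right : b * y * b⁻¹ = x * y

namespace IsA4Triple

variable {x y x' y' b : G}

theorem mul_sq (h : IsA4Triple x y b) : (x * y) ^ 2 = 1 := by
  rw [h.commute.mul_pow, h.left_sq, h.right_sq, one_mul]

theorem conj_mul (h : IsA4Triple x y b) : b * (x * y) * b⁻¹ = x := calc
  b * (x * y) * b⁻¹ = (b * x * b⁻¹) * (b * y * b⁻¹) := by group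
  _ = y * (y * x) := by rw [h.conj_left, h.conj_right, h.commute.eq]
  _ = x := by rw [← mul_assoc, ← sq, h.right_sq, one_mul]

theorem rotate (h : IsA4Triple x y b) : IsA4Triple y (x * y) b where
  left_sq := h.right_sq
  right_sq := h.mul_sq
  commute := h.commute.symm.mul_right (Commute.refl y)
  cube := h.cube
  conj_left := h.conj_right
  conj_right := by
    rw [h.conj_mul, ← mul_assoc, ← h.commute.eq, mul_assoc, ← sq, h.right_sq, mul_one]

theorem inv (h : IsA4Triple x y b) : IsA4Triple x (x * y) b⁻¹ where
  left_sq := h.left_sq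
  right_sq := h.mul_sq
  commute := (Commute.refl x).mul_right h.commute
  cube := by rw [inv_pow, h.cube, inv_one]
  conj_left := calc
    b⁻¹ * x * b⁻¹⁻¹ = b⁻¹ * (b * (x * y) * b⁻¹) * b := by rw [h.conj_mul, inv_inv]
    _ = x * y := by group
  conj_right := calc
    b⁻¹ * (x * y) * b⁻¹⁻¹ = b⁻¹ * (b * y * b⁻¹) * b := by rw [h.conj_right, inv_inv]
    _ = y := by group
    _ = x * (x * y) := by rw [← mul_assoc, ← sq, h.left_sq, one_mul]

theorem mul (h : IsA4Triple x y b) (h' : IsA4Triple x' y' b) (hxx' : Commute x x')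
    (hxy' : Commute x y') (hyx' : Commute y x') (hyy' : Commute y y') :
    IsA4Triple (x * x') (y * y') b where
  left_sq := by rw [hxx'.mul_pow, h.left_sq, h'.left_sq, one_mul]
  right_sq := by rw [hyy'.mul_pow, h.right_sq, h'.right_sq, one_mul]
  commute := (h.commute.mul_right hxy').mul_left (hyx'.symm.mul_right h'.commute)
  cube := h.cube
  conj_left := calc
    b * (x * x') * b⁻¹ = (b * x * b⁻¹) * (b * x' * b⁻¹) := by group
    _ = y * y' := by rw [h.conj_left, h'.conj_left]
  conj_right := calc
    b * (y * y') * b⁻¹ = (b * y * b⁻¹) * (b * y' * b⁻¹) := by group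
    _ = x * x' * (y * y') := by rw [h.conj_right, h'.conj_right, hyx'.mul_mul_mul_comm]

theorem eq_one (h : IsA4Triple x y 1) : x = 1 ∧ y = 1 := by
  have hxy : x = y := by simpa using h.conj_left
  have hx : x = 1 := by simpa [hxy] using h.conj_right
  exact ⟨hx, hxy ▸ hx⟩

theorem mul_pow_three (h : IsA4Triple x y b) : (x * b) ^ 3 = 1 := calc
  (x * b) ^ 3 = x * (b * x * b⁻¹) * (b * (b * x * b⁻¹) * b⁻¹) * b ^ 3 := by
    simp only [pow_succ, pow_zero]; group
  _ = (x * y) ^ 2 := by rw [h.conj_left, h.conj_right, h.cube, mul_one, sq, mul_assoc]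
  _ = 1 := h.mul_sq

theorem mul_ne_one (h : IsA4Triple x y b) (hb : b ≠ 1) : x * b ≠ 1 := by
  intro hxb
  have hb2 : b ^ 2 = 1 := by rw [eq_inv_of_mul_eq_one_right hxb, inv_pow, h.left_sq, inv_one]
  exact hb ((pow_eq_one_iff_of_coprime (by norm_num)).1 ⟨hb2, h.cube⟩)

theorem orderOf_mul (h : IsA4Triple x y b) (hb : b ≠ 1) : orderOf (x * b) = 3 :=
  orderOf_eq_prime h.mul_pow_three (h.mul_ne_one hb)

end IsA4Triple

theorem closure_generating_vector_eq_top {a₁ a₂ a₃ a₄ b : G} (hba₁ : b * a₁ * b⁻¹ = a₂)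
    (hgen : Subgroup.closure {a₁, a₂, a₃, a₄, b} = ⊤) :
    Subgroup.closure {a₁ * b, b, a₃ * b ^ 2, b ^ 2 * a₄ * a₁} = ⊤ := by
  set H := Subgroup.closure ({a₁ * b, b, a₃ * b ^ 2, b ^ 2 * a₄ * a₁} : Set G)
  have hb : b ∈ H := Subgroup.subset_closure (by simp)
  have h₁ : a₁ ∈ H := by
    simpa using H.mul_mem (Subgroup.subset_closure (by simp) : a₁ * b ∈ H) (H.inv_mem hb)
  have h₂ : a₂ ∈ H := hba₁ ▸ H.mul_mem (H.mul_mem hb h₁) (H.inv_mem hb)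
  have h₃ : a₃ ∈ H := by
    simpa using H.mul_mem (Subgroup.subset_closure (by simp) : a₃ * b ^ 2 ∈ H)
      (H.inv_mem (H.pow_mem hb 2))
  have h₄ : a₄ ∈ H := by
    simpa [mul_assoc] using H.mul_mem (H.mul_mem (H.inv_mem (H.pow_mem hb 2))
      (Subgroup.subset_closure (by simp) : b ^ 2 * a₄ * a₁ ∈ H)) (H.inv_mem h₁)
  rw [eq_top_iff, ← hgen, Subgroup.closure_le]
  simp [Set.insert_subset_iff, h₁, h₂, h₃, h₄, hb]

end

theorem stmt14_general {G : Type*} [Group G] (a₁ a₂ a₃ a₄ b : G)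
    (ha₁ : a₁ ^ 2 = 1) (ha₂ : a₂ ^ 2 = 1) (ha₃ : a₃ ^ 2 = 1) (ha₄ : a₄ ^ 2 = 1)
    (hb3 : b ^ 3 = 1)
    (hc₁₂ : a₁ * a₂ = a₂ * a₁) (hc₁₃ : a₁ * a₃ = a₃ * a₁) (hc₁₄ : a₁ * a₄ = a₄ * a₁)
    (hc₂₃ : a₂ * a₃ = a₃ * a₂) (hc₂₄ : a₂ * a₄ = a₄ * a₂) (hc₃₄ : a₃ * a₄ = a₄ * a₃)
    (hba₁ : b * a₁ * b⁻¹ = a₂) (hba₂ : b * a₂ * b⁻¹ = a₁ * a₂)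
    (hba₄ : b * a₄ * b⁻¹ = a₃) (hba₃ : b * a₃ * b⁻¹ = a₃ * a₄)
    (hkey : b ^ 2 * a₃ * b = a₄)
    (hgen : Subgroup.closure {a₁, a₂, a₃, a₄, b} = ⊤)
    (hcard : Nat.card G = 48) :
    (a₁ * b) * b * (a₃ * b ^ 2) * (b ^ 2 * a₄ * a₁) = 1
    ∧ orderOf (a₁ * b) = 3 ∧ orderOf b = 3 ∧ orderOf (a₃ * b ^ 2) = 3
    ∧ orderOf (b ^ 2 * a₄ * a₁) = 3
    ∧ Subgroup.closure {a₁ * b, b, a₃ * b ^ 2, b ^ 2 * a₄ * a₁} = ⊤ := by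
  have h₁₂ : IsA4Triple a₁ a₂ b := ⟨ha₁, ha₂, hc₁₂, hb3, hba₁, hba₂⟩
  have h₄₃ : IsA4Triple a₄ a₃ b := ⟨ha₄, ha₃, hc₃₄.symm, hb3, hba₄, hba₃.trans hc₃₄⟩
  have h₄₁ : IsA4Triple (a₄ * a₁) (a₃ * a₂) b :=
    h₄₃.mul h₁₂ hc₁₄.symm hc₂₄.symm hc₁₃.symm hc₂₃.symm
  have hb : b ≠ 1 := by
    rintro rfl
    obtain ⟨rfl, rfl⟩ := h₁₂.eq_one
    obtain ⟨rfl, rfl⟩ := h₄₃.eq_one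
    simp only [Set.mem_singleton_iff, Set.insert_eq_of_mem, Subgroup.closure_singleton_one] at hgen
    rw [← Subgroup.card_top, ← hgen, Subgroup.card_bot] at hcard
    norm_num at hcard
  have hb2 : b ^ 2 = b⁻¹ := (inv_eq_of_mul_eq_one_right (by rw [← pow_succ', hb3])).symm
  refine ⟨?_, h₁₂.orderOf_mul hb, orderOf_eq_prime hb3 hb, ?_, ?_,
    closure_generating_vector_eq_top hba₁ hgen⟩
  · calc (a₁ * b) * b * (a₃ * b ^ 2) * (b ^ 2 * a₄ * a₁)
          = a₁ * (b ^ 2 * a₃ * b) * b ^ 3 * a₄ * a₁ := by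
            simp only [pow_succ, pow_zero, one_mul, mul_assoc]
      _ = 1 := by rw [hkey, hb3, mul_one, mul_assoc a₁, ← sq, ha₄, mul_one, ← sq, ha₁]
  · rw [hb2]
    exact h₄₃.rotate.inv.orderOf_mul (inv_ne_one.2 hb)
  · rw [hb2, mul_assoc, orderOf_mul_comm]
    exact h₄₁.inv.orderOf_mul (inv_ne_one.2 hb)

theorem stmt14 {G : Type*} [Group G] [Finite G] (a₁ a₂ a₃ a₄ b : G)
    (ha₁ : a₁ ^ 2 = 1) (ha₂ : a₂ ^ 2 = 1) (ha₃ : a₃ ^ 2 = 1) (ha₄ : a₄ ^ 2 = 1)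
    (hb3 : b ^ 3 = 1)
    (hc₁₂ : a₁ * a₂ = a₂ * a₁) (hc₁₃ : a₁ * a₃ = a₃ * a₁) (hc₁₄ : a₁ * a₄ = a₄ * a₁)
    (hc₂₃ : a₂ * a₃ = a₃ * a₂) (hc₂₄ : a₂ * a₄ = a₄ * a₂) (hc₃₄ : a₃ * a₄ = a₄ * a₃)
    (hba₁ : b * a₁ * b⁻¹ = a₂) (hba₂ : b * a₂ * b⁻¹ = a₁ * a₂)
    (hba₄ : b * a₄ * b⁻¹ = a₃) (hba₃ : b * a₃ * b⁻¹ = a₃ * a₄)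
    (hkey : b ^ 2 * a₃ * b = a₄)
    (hgen : Subgroup.closure {a₁, a₂, a₃, a₄, b} = ⊤)
    (hcard : Nat.card G = 48) :
    (a₁ * b) * b * (a₃ * b ^ 2) * (b ^ 2 * a₄ * a₁) = 1
    ∧ orderOf (a₁ * b) = 3 ∧ orderOf b = 3 ∧ orderOf (a₃ * b ^ 2) = 3
    ∧ orderOf (b ^ 2 * a₄ * a₁) = 3
    ∧ Subgroup.closure {a₁ * b, b, a₃ * b ^ 2, b ^ 2 * a₄ * a₁} = ⊤ :=
  stmt14_general a₁ a₂ a₃ a₄ b ha₁ ha₂ ha₃ ha₄ hb3 hc₁₂ hc₁₃ hc₁₄ hc₂₃ hc₂₄ hc₃₄ hba₁ hba₂ hba₄ hba₃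
    hkey hgen hcard
end

section
/- Let G = N ⋊ B be the paper's group with B = ⟨σ⟩ of order 3 acting on N ≅ (ℤ/2)^(2n) without nontrivial fixed points, and let L ≤ N be a subgroup of index 2 with σ⁻¹Lσ ≠ L. Let G act on a ℚ-vector space (or abelian group) V, and let z ∈ V satisfy h·z = z for all h ∈ L and n·z = −z for all n ∈ N \ L. Then (∑_{h∈L} h)·z = 2^(2n−1)·z and (∑_{h∈L} h)·(σ^k z) = 0 for k = 1, 2. -/
/-!
Every `h ∈ L` fixes `z`, so `∑_{h ∈ L} h` acts on `z` as multiplication by `|L| = 2^(2n-1)`.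
For `τ = σᵏ` with `k ∈ {1, 2}`, `τ` does not normalize `L`, so some `h₁ ∈ L` has
`τ⁻¹ h₁ τ ∈ N \ L`; then `h₁` negates `τ z`. Since `∑_{h ∈ L} h` absorbs right multiplication
by `h₁`, its value `w` at `τ z` satisfies `w = -w`, hence `w = 0` as `V` is a `ℚ`-vector space.
-/

namespace Subgroup

variable {G : Type*} [Group G]

theorem card_mul_relIndex {H K : Subgroup G} (hHK : H ≤ K) :
    Nat.card H * H.relIndex K = Nat.card K := by
  simpa only [relIndex_bot_left] using relIndex_mul_relIndex _ _ _ bot_le hHK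

theorem exists_conj_notMem_of_notMem_normalizer {H : Subgroup G} [Finite H] {g : G}
    (hg : g ∉ normalizer (H : Set G)) : ∃ h ∈ H, g * h * g⁻¹ ∉ H := by
  by_contra! hH
  exact hg (mem_normalizer_fintype hH)

theorem inv_pow_notMem_of_pow_three_eq_one {H : Subgroup G} {g : G} (hg3 : g ^ 3 = 1)
    (hg : g ∉ H) {k : ℕ} (hk : k = 1 ∨ k = 2) : (g ^ k)⁻¹ ∉ H := by
  rw [inv_mem_iff]
  rcases hk with rfl | rfl
  · simpa using hg
  · intro hg2
    have hg4 : g ^ 2 * g ^ 2 = g := by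
      rw [← pow_add, show 2 + 2 = 3 + 1 by rfl, pow_succ, hg3, one_mul]
    exact hg (hg4 ▸ H.mul_mem hg2 hg2)

end Subgroup

namespace Representation

section AddCommMonoid

variable {k G V : Type*} [CommSemiring k] [Group G] [AddCommMonoid V] [Module k V]
  (ρ : Representation k G V) (H : Subgroup G) [Fintype H]

theorem sum_subgroup_apply_of_forall_fixed {v : V} (hv : ∀ h ∈ H, ρ h v = v) :
    (∑ h : H, ρ h) v = Nat.card H • v := by
  simp [LinearMap.sum_apply, hv]

theorem sum_subgroup_apply_apply_of_mem {g : G} (hg : g ∈ H) (v : V) :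
    (∑ h : H, ρ h) (ρ g v) = (∑ h : H, ρ h) v := by
  simp only [LinearMap.sum_apply, ← Module.End.mul_apply, ← map_mul]
  exact Fintype.sum_equiv (Equiv.mulRight ⟨g, hg⟩) _ _ fun h => rfl

end AddCommMonoid

theorem sum_subgroup_apply_eq_zero_of_apply_eq_neg {k G V : Type*} [CommSemiring k] [Group G]
    [AddCommGroup V] [IsAddTorsionFree V] [Module k V] (ρ : Representation k G V)
    (H : Subgroup G) [Fintype H] {g : G} (hg : g ∈ H) {v : V} (hv : ρ g v = -v) :
    (∑ h : H, ρ h) v = 0 := by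
  rw [← self_eq_neg]
  conv_lhs => rw [← ρ.sum_subgroup_apply_apply_of_mem H hg, hv, map_neg]

end Representation

theorem stmt16_general {G V : Type*} [Group G] [AddCommGroup V] [Module ℚ V]
    (n : ℕ) (hn : 0 < n) (ρ : Representation ℚ G V)
    (N : Subgroup G) (hN : N.Normal)
    (hcardN : Nat.card N = 2 ^ (2 * n))
    (σ : G) (hσ3 : σ ^ 3 = 1)
    (L : Subgroup G) [Fintype ↥L] (hLN : L ≤ N) (hLidx : L.relIndex N = 2)
    (hLσ : Subgroup.map (MulAut.conj σ).toMonoidHom L ≠ L)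
    (z : V) (hz1 : ∀ h ∈ L, ρ h z = z) (hz2 : ∀ x ∈ N, x ∉ L → ρ x z = -z) :
    (∑ h : ↥L, ρ (h : G)) z = (2 ^ (2 * n - 1) : ℚ) • z
    ∧ ∀ k : ℕ, k = 1 ∨ k = 2 → (∑ h : ↥L, ρ (h : G)) (ρ (σ ^ k) z) = 0 := by
  refine ⟨?_, fun k hk => ?_⟩
  · have hcardL : Nat.card L * 2 = 2 ^ (2 * n - 1) * 2 := by
      rw [← pow_succ, Nat.sub_add_cancel (by omega), ← hcardN, ← hLidx]
      exact Subgroup.card_mul_relIndex hLN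
    rw [ρ.sum_subgroup_apply_of_forall_fixed L hz1, Nat.eq_of_mul_eq_mul_right two_pos hcardL,
      ← Nat.cast_smul_eq_nsmul ℚ]
    norm_num
  · have hσL : σ ∉ Subgroup.normalizer (L : Set G) :=
      mt Subgroup.mem_normalizer_iff_map_conj_eq.mp hLσ
    obtain ⟨h, hL, hconj⟩ := L.exists_conj_notMem_of_notMem_normalizer
      (Subgroup.inv_pow_notMem_of_pow_three_eq_one hσ3 hσL hk)
    rw [inv_inv] at hconj
    have : IsAddTorsionFree V := .of_module_rat V
    refine ρ.sum_subgroup_apply_eq_zero_of_apply_eq_neg L hL ?_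
    have hN' : (σ ^ k)⁻¹ * h * σ ^ k ∈ N := by
      simpa using hN.conj_mem h (hLN hL) (σ ^ k)⁻¹
    calc ρ h (ρ (σ ^ k) z) = ρ (σ ^ k) (ρ ((σ ^ k)⁻¹ * h * σ ^ k) z) := by
          simp only [← Module.End.mul_apply, ← map_mul]
          group
      _ = -ρ (σ ^ k) z := by rw [hz2 _ hN' hconj, map_neg]

theorem stmt16 {G V : Type*} [Group G] [Finite G] [AddCommGroup V] [Module ℚ V]
    (n : ℕ) (hn : 0 < n) (ρ : Representation ℚ G V)
    (N : Subgroup G) (hN : N.Normal)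
    (hsq : ∀ x ∈ N, x ^ 2 = 1) (hcardN : Nat.card N = 2 ^ (2 * n))
    (hfpf : ∀ g : G, g ∉ N → ∀ x ∈ N, g * x * g⁻¹ = x → x = 1)
    (σ : G) (hσ : σ ∉ N) (hσ3 : σ ^ 3 = 1)
    (L : Subgroup G) [Fintype ↥L] (hLN : L ≤ N) (hLidx : L.relIndex N = 2)
    (hLσ : Subgroup.map (MulAut.conj σ).toMonoidHom L ≠ L)
    (z : V) (hz1 : ∀ h ∈ L, ρ h z = z) (hz2 : ∀ x ∈ N, x ∉ L → ρ x z = -z) :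
    (∑ h : ↥L, ρ (h : G)) z = (2 ^ (2 * n - 1) : ℚ) • z
    ∧ ∀ k : ℕ, k = 1 ∨ k = 2 → (∑ h : ↥L, ρ (h : G)) (ρ (σ ^ k) z) = 0 :=
  stmt16_general n hn ρ N hN hcardN σ hσ3 L hLN hLidx hLσ z hz1 hz2
end

section
/- With notation as in the previous statement, the endomorphism Φ := (∑_{h∈L} h) ∘ (∑_{k=0}^{2} σ^k) of V acts on the subspace A := {z ∈ V : h z = z for all h ∈ L, and n z = −z for all n ∈ N \ L} as multiplication by 2^(2n−1). -/
/-!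
Write `χ` for the sign character of `N` with kernel `L`, so that `A` is the `χ`-isotypic part.
The term `k = 0` of `Φ z` contributes `|L| • z = 2 ^ (2n - 1) • z`. For `k = 1, 2` one has
`∑_{h ∈ L} h σᵏ z = σᵏ ∑_{h ∈ L} (σ⁻ᵏ h σᵏ) z`, and since `σ⁻ᵏ L σᵏ ≠ L` some `x ∈ L` is conjugated
outside `L`; translating the sum by `x` flips its sign, so it vanishes over `ℚ`.
-/

namespace Subgroup

variable {G : Type*} [Group G] {L N : Subgroup G}

theorem mul_mem_of_relIndex_eq_two (hL : L.relIndex N = 2) {a b : G} (ha : a ∈ N) (hb : b ∈ N)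
    (haL : a ∉ L) (hbL : b ∉ L) : a * b ∈ L := by
  have h := (mul_mem_iff_of_index_two (H := L.subgroupOf N) hL (a := ⟨a, ha⟩) (b := ⟨b, hb⟩)).mpr
  simp only [mem_subgroupOf] at h
  exact h (iff_of_false haL hbL)

theorem card_mul_two_of_relIndex_eq_two (hLN : L ≤ N) (hL : L.relIndex N = 2) :
    Nat.card L * 2 = Nat.card N := by
  simpa only [relIndex_bot_left, hL] using relIndex_mul_relIndex ⊥ L N bot_le hLN

theorem exists_conj_notMem_of_map_conj_ne [Finite L] {t : G}
    (ht : L.map (MulAut.conj t).toMonoidHom ≠ L) : ∃ x ∈ L, t * x * t⁻¹ ∉ L := by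
  by_contra! h
  refine ht (eq_of_le_of_card_ge ?_ (card_map_of_injective (MulAut.conj t).injective).ge)
  rintro _ ⟨x, hx, rfl⟩
  exact h x hx

end Subgroup

theorem Fintype.sum_eq_zero_of_mul_left_eq_neg {H M : Type*} [Group H] [Fintype H]
    [AddCommGroup M] [IsAddTorsionFree M] {f : H → M} (a : H) (hf : ∀ x, f (a * x) = -f x) :
    ∑ x, f x = 0 := by
  rw [← self_eq_neg, ← Finset.sum_neg_distrib]
  exact Fintype.sum_equiv (Equiv.mulLeft a) _ _ fun x => by simp [hf]

namespace Representation

variable {k G V : Type*} [CommSemiring k] [Group G] [AddCommGroup V] [Module k V]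
  (ρ : Representation k G V)
  {L N : Subgroup G} {z : V}

theorem apply_mul_apply_eq_neg (hL : L.relIndex N = 2) (hzL : ∀ h ∈ L, ρ h z = z)
    (hzN : ∀ x ∈ N, x ∉ L → ρ x z = -z) {a b : G} (ha : a ∈ N) (haL : a ∉ L) (hb : b ∈ N) :
    ρ (a * b) z = -ρ b z := by
  by_cases hbL : b ∈ L
  · rw [map_mul, Module.End.mul_apply, hzL b hbL, hzN a ha haL]
  · rw [hzL _ (Subgroup.mul_mem_of_relIndex_eq_two hL ha hb haL hbL), hzN b hb hbL, neg_neg]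

theorem sum_apply_apply_eq_zero [IsAddTorsionFree V] [Fintype L] (hN : N.Normal) (hLN : L ≤ N)
    (hL : L.relIndex N = 2) (hzL : ∀ h ∈ L, ρ h z = z) (hzN : ∀ x ∈ N, x ∉ L → ρ x z = -z)
    {t : G} (ht : L.map (MulAut.conj t⁻¹).toMonoidHom ≠ L) :
    ∑ h : L, ρ h (ρ t z) = 0 := by
  obtain ⟨x, hxL, hx⟩ := Subgroup.exists_conj_notMem_of_map_conj_ne ht
  have hconj (h : G) (hh : h ∈ L) : t⁻¹ * h * t⁻¹⁻¹ ∈ N := hN.conj_mem h (hLN hh) t⁻¹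
  have hcomm (h : G) : ρ h (ρ t z) = ρ t (ρ (t⁻¹ * h * t⁻¹⁻¹) z) := by
    rw [← Module.End.mul_apply, ← map_mul, ← Module.End.mul_apply, ← map_mul, inv_inv]
    group
  simp only [hcomm, ← map_sum]
  rw [Fintype.sum_eq_zero_of_mul_left_eq_neg ⟨x, hxL⟩, map_zero]
  intro h
  rw [show t⁻¹ * ((⟨x, hxL⟩ * h : L) : G) * t⁻¹⁻¹ = (t⁻¹ * x * t⁻¹⁻¹) * (t⁻¹ * h * t⁻¹⁻¹) by
    push_cast; group]
  exact ρ.apply_mul_apply_eq_neg hL hzL hzN (hconj x hxL) hx (hconj h h.2)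

end Representation

theorem stmt17_general {G V : Type*} [Group G] [AddCommGroup V] [Module ℚ V]
    (n : ℕ) (ρ : Representation ℚ G V)
    (N : Subgroup G) (hN : N.Normal)
    (hcardN : Nat.card N = 2 ^ (2 * n))
    (σ : G) (hσ3 : σ ^ 3 = 1)
    (L : Subgroup G) [Fintype ↥L] (hLN : L ≤ N) (hLidx : L.relIndex N = 2)
    (hLσ1 : Subgroup.map (MulAut.conj σ).toMonoidHom L ≠ L)
    (hLσ2 : Subgroup.map (MulAut.conj (σ ^ 2)).toMonoidHom L ≠ L) :
    ∀ z : V, (∀ h ∈ L, ρ h z = z) → (∀ x ∈ N, x ∉ L → ρ x z = -z) →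
      (∑ h : ↥L, ρ (h : G)) ((∑ k ∈ Finset.range 3, ρ (σ ^ k)) z)
        = (2 ^ (2 * n - 1) : ℚ) • z := by
  intro z hzL hzN
  have := IsAddTorsionFree.of_module_rat V
  have hσinv : σ⁻¹ = σ ^ 2 := inv_eq_of_mul_eq_one_right (by rw [← pow_succ', hσ3])
  have hσ2inv : (σ ^ 2)⁻¹ = σ := by rw [← hσinv, inv_inv]
  have hcardL : Fintype.card L = 2 ^ (2 * n - 1) := by
    have h := Subgroup.card_mul_two_of_relIndex_eq_two hLN hLidx
    rw [hcardN, Nat.card_eq_fintype_card] at h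
    obtain _ | m := n
    · lia
    · rw [show 2 * (m + 1) = 2 * (m + 1) - 1 + 1 by lia, pow_succ] at h
      lia
  have hσ := ρ.sum_apply_apply_eq_zero hN hLN hLidx hzL hzN (t := σ) (hσinv ▸ hLσ2)
  have hσ2 := ρ.sum_apply_apply_eq_zero hN hLN hLidx hzL hzN (t := σ ^ 2) (hσ2inv ▸ hLσ1)
  simp only [Finset.sum_range_succ, Finset.range_one, Finset.sum_singleton, pow_zero, pow_one,
    map_one, LinearMap.add_apply, Module.End.one_apply, map_add, LinearMap.sum_apply,
    hσ, hσ2, add_zero]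
  rw [Finset.sum_congr rfl fun h _ => hzL _ h.2, Finset.sum_const, Finset.card_univ, hcardL,
    ← Nat.cast_smul_eq_nsmul ℚ, Nat.cast_pow, Nat.cast_ofNat]

theorem stmt17 {G V : Type*} [Group G] [Finite G] [AddCommGroup V] [Module ℚ V]
    (n : ℕ) (hn : 0 < n) (ρ : Representation ℚ G V)
    (N : Subgroup G) (hN : N.Normal)
    (hsq : ∀ x ∈ N, x ^ 2 = 1) (hcardN : Nat.card N = 2 ^ (2 * n))
    (σ : G) (hσ : σ ∉ N) (hσ3 : σ ^ 3 = 1)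
    (L : Subgroup G) [Fintype ↥L] (hLN : L ≤ N) (hLidx : L.relIndex N = 2)
    (hLσ1 : Subgroup.map (MulAut.conj σ).toMonoidHom L ≠ L)
    (hLσ2 : Subgroup.map (MulAut.conj (σ ^ 2)).toMonoidHom L ≠ L) :
    ∀ z : V, (∀ h ∈ L, ρ h z = z) → (∀ x ∈ N, x ∉ L → ρ x z = -z) →
      (∑ h : ↥L, ρ (h : G)) ((∑ k ∈ Finset.range 3, ρ (σ ^ k)) z)
        = (2 ^ (2 * n - 1) : ℚ) • z :=
  stmt17_general n ρ N hN hcardN σ hσ3 L hLN hLidx hLσ1 hLσ2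
end

section
/- Let G = N ⋊ B be the paper's group and let G = H₀ ∪ H₁ ∪ ⋯ ∪ H_s be the decomposition into double cosets of B in G, with H₀ = B. Then s = m = (2^(2n)−1)/3 and |H_i| = 9 for every i = 1, …, m; moreover each H_i contains exactly 3 involutions (forming one conjugacy class of involutions of G) and 6 elements of order 3. -/
/-- The double coset `B g B` as a subset of `G`. -/
def doubleCoset {G : Type*} [Group G] (B : Subgroup G) (g : G) : Set G :=
  {x : G | ∃ b₁ ∈ B, ∃ b₂ ∈ B, x = b₁ * g * b₂}

/-!
Elements outside `N` have order 3 (the cube of `g` lies in `N` and commutes with `g`), and the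
nontrivial elements of `N` are involutions. Since `G = N B`, every double coset other than `B` is
`B x B` with `1 ≠ x ∈ N`. Fixed-point-freeness makes `(b₁, b₂) ↦ b₁ x b₂` injective, so
`|B x B| = 9`; moreover `b₁ x b₂ ∈ N` iff `b₂ = b₁⁻¹`, so the involutions of `B x B` are the three
`B`-conjugates of `x`, which form the whole conjugacy class of `x` because `N` is abelian. The
number of double cosets then follows from `|G| = 3 + 9 s`.
-/

section DoubleCoset

variable {G : Type*} [Group G] (B : Subgroup G)

lemma doubleCoset_eq_doubleCoset (g : G) :
    doubleCoset B g = DoubleCoset.doubleCoset g B B := by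
  ext x
  rw [DoubleCoset.mem_doubleCoset]
  rfl

lemma mem_doubleCoset_self (g : G) : g ∈ doubleCoset B g := by
  rw [doubleCoset_eq_doubleCoset]
  exact DoubleCoset.mem_doubleCoset_self B B g

variable {B} in
lemma doubleCoset_eq_of_mem {g y : G} (hy : y ∈ doubleCoset B g) :
    doubleCoset B y = doubleCoset B g := by
  simp only [doubleCoset_eq_doubleCoset] at hy ⊢
  exact DoubleCoset.doubleCoset_eq_of_mem hy

variable {B} in
lemma doubleCoset_of_mem {g : G} (hg : g ∈ B) : doubleCoset B g = B := by
  ext y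
  constructor
  · rintro ⟨b₁, h₁, b₂, h₂, rfl⟩
    exact mul_mem (mul_mem h₁ hg) h₂
  · intro hy
    exact ⟨y * g⁻¹, mul_mem hy (inv_mem hg), 1, one_mem B, by group⟩

lemma doubleCoset_eq_range (g : G) :
    doubleCoset B g = Set.range fun p : B × B => (p.1 : G) * g * p.2 := by
  ext y
  constructor
  · rintro ⟨b₁, h₁, b₂, h₂, rfl⟩
    exact ⟨(⟨b₁, h₁⟩, ⟨b₂, h₂⟩), rfl⟩
  · rintro ⟨p, rfl⟩
    exact ⟨p.1, p.1.2, p.2, p.2.2, rfl⟩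

variable {B} in
lemma one_notMem_doubleCoset {g : G} (hg : g ∉ B) : 1 ∉ doubleCoset B g := fun h => by
  have hg' := mem_doubleCoset_self B g
  rw [← doubleCoset_eq_of_mem h, doubleCoset_of_mem (one_mem B)] at hg'
  exact hg hg'

lemma card_doubleCosets [Finite G] {m : ℕ} (hm0 : 0 < m)
    (hm : ∀ g ∉ B, (doubleCoset B g).ncard = m) :
    Nat.card {S : Set G // ∃ g : G, S = doubleCoset B g} = (Nat.card G - Nat.card B) / m + 1 := by
  classical
  let T := {S : Set G // ∃ g : G, S = doubleCoset B g}
  have : Fintype T := Fintype.ofFinite T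
  let f : G → T := fun g => ⟨doubleCoset B g, g, rfl⟩
  have hfiber : ∀ S : T, Nat.card {x // f x = S} = S.1.ncard := by
    rintro ⟨S, g, rfl⟩
    refine (Nat.card_congr (Equiv.subtypeEquivRight fun x => ?_)).trans (Nat.card_coe_set_eq _)
    exact Subtype.ext_iff.trans ⟨fun h => h ▸ mem_doubleCoset_self B x, doubleCoset_eq_of_mem⟩
  let S₀ : T := f 1
  have hS₀ : S₀.1 = B := doubleCoset_of_mem (one_mem B)
  have hS : ∀ S ∈ Finset.univ.erase S₀, S.1.ncard = m := by
    rintro ⟨S, g, rfl⟩ hS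
    exact hm g fun hg =>
      Finset.ne_of_mem_erase hS (Subtype.ext ((doubleCoset_of_mem hg).trans hS₀.symm))
  have hcard : Nat.card G = Nat.card B + m * (Fintype.card T - 1) := by
    calc Nat.card G = ∑ S : T, S.1.ncard := by
          rw [← Nat.card_congr (Equiv.sigmaFiberEquiv f), Nat.card_sigma]
          exact Finset.sum_congr rfl fun S _ => hfiber S
      _ = Nat.card B + m * (Fintype.card T - 1) := by
          rw [← Finset.add_sum_erase _ _ (Finset.mem_univ S₀), Finset.sum_congr rfl hS,
            Finset.sum_const, Finset.card_erase_of_mem (Finset.mem_univ _), Finset.card_univ,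
            hS₀, ← Nat.card_coe_set_eq, smul_eq_mul, mul_comm]
          rfl
  rw [Nat.card_eq_fintype_card, hcard, Nat.add_sub_cancel_left, Nat.mul_div_cancel_left _ hm0,
    Nat.sub_add_cancel (Fintype.card_pos_iff.mpr ⟨S₀⟩)]

end DoubleCoset

section FixedPointFree

variable {G : Type*} [Group G] {N B : Subgroup G}

lemma orderOf_eq_three_of_notMem (hN : N.Normal) (hidx : N.index = 3)
    (hfpf : ∀ g : G, g ∉ N → ∀ x ∈ N, g * x * g⁻¹ = x → x = 1) {g : G} (hg : g ∉ N) :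
    orderOf g = 3 := by
  have := hN
  have hcube : g ^ 3 = 1 := hfpf g hg _ (hidx ▸ N.pow_index_mem g) (by group)
  exact orderOf_eq_prime hcube fun h => hg (h ▸ one_mem N)

lemma orderOf_eq_three_iff_notMem (hN : N.Normal) (hsq : ∀ x ∈ N, x ^ 2 = 1) (hidx : N.index = 3)
    (hfpf : ∀ g : G, g ∉ N → ∀ x ∈ N, g * x * g⁻¹ = x → x = 1) {y : G} :
    orderOf y = 3 ↔ y ∉ N := by
  refine ⟨fun h3 hy => ?_, orderOf_eq_three_of_notMem hN hidx hfpf⟩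
  have := orderOf_dvd_of_pow_eq_one (hsq y hy)
  rw [h3] at this
  norm_num at this

lemma orderOf_eq_two_iff_mem (hN : N.Normal) (hsq : ∀ x ∈ N, x ^ 2 = 1) (hidx : N.index = 3)
    (hfpf : ∀ g : G, g ∉ N → ∀ x ∈ N, g * x * g⁻¹ = x → x = 1) {y : G} (hy : y ≠ 1) :
    orderOf y = 2 ↔ y ∈ N := by
  refine ⟨fun h2 => ?_, fun hyN => orderOf_eq_prime (hsq y hyN) hy⟩
  by_contra hyN
  rw [orderOf_eq_three_of_notMem hN hidx hfpf hyN] at h2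
  norm_num at h2

lemma isComplement'_of_index_eq_card [Finite G] (hidx : N.index = Nat.card B)
    (hNB : Disjoint N B) : N.IsComplement' B :=
  Subgroup.isComplement'_of_card_mul_and_disjoint (hidx ▸ N.card_mul_index) hNB

lemma injective_mul_mul (hN : N.Normal) (hBN : Disjoint B N)
    (hfpf : ∀ g : G, g ∉ N → ∀ x ∈ N, g * x * g⁻¹ = x → x = 1) {x : G} (hxN : x ∈ N)
    (hx1 : x ≠ 1) : Function.Injective fun p : B × B => (p.1 : G) * x * p.2 := by
  rintro ⟨⟨b₁, h₁⟩, ⟨b₂, h₂⟩⟩ ⟨⟨b₁', h₁'⟩, ⟨b₂', h₂'⟩⟩ h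
  dsimp only at h
  set c := b₁'⁻¹ * b₁
  set d := b₂' * b₂⁻¹
  have hc : c ∈ B := mul_mem (inv_mem h₁') h₁
  have hcx : x⁻¹ * c * x = d := by
    simp only [c, d]
    rw [show x⁻¹ * (b₁'⁻¹ * b₁) * x = x⁻¹ * b₁'⁻¹ * (b₁ * x * b₂) * b₂⁻¹ by group, h]
    group
  -- `c⁻¹ d` is the commutator `[c, x]`, which lies in `B ∩ N`.
  have hcd : c = d := by
    have hB : c⁻¹ * d ∈ B := mul_mem (inv_mem hc) (mul_mem h₂' (inv_mem h₂))
    have hN' : c⁻¹ * d ∈ N := by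
      rw [← hcx, ← mul_assoc, ← mul_assoc]
      exact mul_mem (by simpa using hN.conj_mem _ (inv_mem hxN) c⁻¹) hxN
    exact inv_mul_eq_one.mp (Subgroup.disjoint_def.mp hBN hB hN')
  have hc1 : c = 1 := by
    refine Subgroup.disjoint_def.mp hBN hc (not_not.mp fun hcN => hx1 (hfpf c hcN x hxN ?_))
    have hcomm : c * x = x * c := by
      calc c * x = x * (x⁻¹ * c * x) := by group
        _ = x * c := by rw [hcx, hcd]
    rw [hcomm, mul_inv_cancel_right]
  have hd1 : d = 1 := hcd ▸ hc1
  simp only [c, d, inv_mul_eq_one, mul_inv_eq_one] at hc1 hd1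
  simp [hc1, hd1]

lemma commute_of_sq_eq_one (hsq : ∀ x ∈ N, x ^ 2 = 1) {a b : G} (ha : a ∈ N) (hb : b ∈ N) :
    Commute a b :=
  congrArg Subtype.val <| Commute.of_orderOf_dvd_two
    (fun x : N => orderOf_dvd_of_pow_eq_one (Subtype.ext (hsq x x.2))) ⟨a, ha⟩ ⟨b, hb⟩

lemma doubleCoset_inter_eq_range_conj (hN : N.Normal) (hBN : Disjoint B N) {x : G}
    (hx : x ∈ N) : doubleCoset B x ∩ N = Set.range fun b : B => (b : G) * x * b⁻¹ := by
  ext y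
  constructor
  · rintro ⟨⟨b₁, h₁, b₂, h₂, rfl⟩, hy⟩
    have hb : b₁ * b₂ ∈ N := by
      rw [show b₁ * b₂ = (b₁ * x * b₁⁻¹)⁻¹ * (b₁ * x * b₂) by group]
      exact mul_mem (inv_mem (hN.conj_mem x hx b₁)) hy
    have hb₂ : b₂ = b₁⁻¹ :=
      eq_inv_of_mul_eq_one_right (Subgroup.disjoint_def.mp hBN (mul_mem h₁ h₂) hb)
    exact ⟨⟨b₁, h₁⟩, by rw [hb₂]; rfl⟩
  · rintro ⟨b, rfl⟩
    exact ⟨⟨b, b.2, b⁻¹, inv_mem b.2, rfl⟩, hN.conj_mem x hx b⟩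

lemma setOf_isConj_eq_range_conj (hN : N.Normal) (hNB : N.IsComplement' B)
    (hcomm : ∀ a ∈ N, ∀ b ∈ N, Commute a b) {x : G} (hx : x ∈ N) :
    {y | IsConj x y} = Set.range fun b : B => (b : G) * x * b⁻¹ := by
  ext y
  constructor
  · intro hy
    obtain ⟨c, rfl⟩ := isConj_iff.mp hy
    obtain ⟨⟨⟨w, hw⟩, ⟨b, hb⟩⟩, rfl⟩ := hNB.2 c
    refine ⟨⟨b, hb⟩, ?_⟩
    have hwc := hcomm w hw _ (hN.conj_mem x hx b)
    calc b * x * b⁻¹ = w * (b * x * b⁻¹) * w⁻¹ := by rw [hwc.eq, mul_inv_cancel_right]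
      _ = w * b * x * (w * b)⁻¹ := by group
  · rintro ⟨b, rfl⟩
    exact isConj_iff.mpr ⟨b, rfl⟩

lemma ncard_doubleCoset (hN : N.Normal) (hBN : Disjoint B N)
    (hfpf : ∀ g : G, g ∉ N → ∀ x ∈ N, g * x * g⁻¹ = x → x = 1) {x : G} (hxN : x ∈ N)
    (hx1 : x ≠ 1) : (doubleCoset B x).ncard = Nat.card B * Nat.card B := by
  rw [doubleCoset_eq_range, Set.ncard_range_of_injective (injective_mul_mul hN hBN hfpf hxN hx1),
    Nat.card_prod]

lemma ncard_doubleCoset_inter (hN : N.Normal) (hBN : Disjoint B N)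
    (hfpf : ∀ g : G, g ∉ N → ∀ x ∈ N, g * x * g⁻¹ = x → x = 1) {x : G} (hxN : x ∈ N)
    (hx1 : x ≠ 1) : (doubleCoset B x ∩ N).ncard = Nat.card B := by
  have hinj : Function.Injective fun b : B => (b : G) * x * b⁻¹ :=
    (injective_mul_mul hN hBN hfpf hxN hx1).comp (f := fun b : B => (b, b⁻¹))
      fun b b' h => congrArg Prod.fst h
  rw [doubleCoset_inter_eq_range_conj hN hBN hxN, Set.ncard_range_of_injective hinj]

lemma setOf_mem_doubleCoset_orderOf_eq_two (hN : N.Normal) (hsq : ∀ x ∈ N, x ^ 2 = 1)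
    (hidx : N.index = 3) (hfpf : ∀ g : G, g ∉ N → ∀ x ∈ N, g * x * g⁻¹ = x → x = 1) {g : G}
    (hg : g ∉ B) : {y ∈ doubleCoset B g | orderOf y = 2} = doubleCoset B g ∩ N := by
  ext y
  exact and_congr_right fun hy =>
    orderOf_eq_two_iff_mem hN hsq hidx hfpf (ne_of_mem_of_not_mem hy (one_notMem_doubleCoset hg))

lemma setOf_mem_doubleCoset_orderOf_eq_three (hN : N.Normal) (hsq : ∀ x ∈ N, x ^ 2 = 1)
    (hidx : N.index = 3) (hfpf : ∀ g : G, g ∉ N → ∀ x ∈ N, g * x * g⁻¹ = x → x = 1) (g : G) :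
    {y ∈ doubleCoset B g | orderOf y = 3} = doubleCoset B g \ N := by
  ext y
  exact and_congr_right fun _ => orderOf_eq_three_iff_notMem hN hsq hidx hfpf

lemma exists_doubleCoset_eq_of_notMem (hNB : N.IsComplement' B) {g : G} (hg : g ∉ B) :
    ∃ x ∈ N, x ≠ 1 ∧ doubleCoset B g = doubleCoset B x := by
  obtain ⟨⟨⟨x, hx⟩, ⟨b, hb⟩⟩, rfl⟩ := hNB.2 g
  refine ⟨x, hx, ?_, (doubleCoset_eq_of_mem ⟨1, one_mem B, b⁻¹, inv_mem hb, by group⟩).symm⟩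
  rintro rfl
  exact hg (by simpa using hb)

lemma mem_doubleCoset_and_orderOf_eq_two_iff_isConj (hN : N.Normal) (hsq : ∀ x ∈ N, x ^ 2 = 1)
    (hidx : N.index = 3) (hfpf : ∀ g : G, g ∉ N → ∀ x ∈ N, g * x * g⁻¹ = x → x = 1)
    (hBN : Disjoint B N) (hNB : N.IsComplement' B) {g z : G} (hz : z ∈ doubleCoset B g)
    (hz2 : orderOf z = 2) (y : G) : (y ∈ doubleCoset B g ∧ orderOf y = 2) ↔ IsConj z y := by
  have hz1 : z ≠ 1 := by
    rintro rfl
    simp at hz2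
  have hzN : z ∈ N := (orderOf_eq_two_iff_mem hN hsq hidx hfpf hz1).mp hz2
  have hzB : z ∉ B := fun h => hz1 (Subgroup.disjoint_def.mp hBN h hzN)
  rw [← doubleCoset_eq_of_mem hz]
  change y ∈ {y ∈ doubleCoset B z | orderOf y = 2} ↔ y ∈ {y | IsConj z y}
  rw [setOf_mem_doubleCoset_orderOf_eq_two hN hsq hidx hfpf hzB,
    doubleCoset_inter_eq_range_conj hN hBN hzN,
    setOf_isConj_eq_range_conj hN hNB (fun _ ha _ hb => commute_of_sq_eq_one hsq ha hb) hzN]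

end FixedPointFree

theorem stmt18_general {G : Type*} [Group G] [Finite G] (n : ℕ)
    (N B : Subgroup G) (hN : N.Normal)
    (hsq : ∀ x ∈ N, x ^ 2 = 1) (hcardN : Nat.card N = 2 ^ (2 * n))
    (hidxN : N.index = 3) (hcardB : Nat.card B = 3) (hBN : B ⊓ N = ⊥)
    (hfpf : ∀ g : G, g ∉ N → ∀ x ∈ N, g * x * g⁻¹ = x → x = 1) :
    Nat.card {S : Set G // ∃ g : G, S = doubleCoset B g} = (2 ^ (2 * n) - 1) / 3 + 1
    ∧ ∀ g : G, g ∉ B →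
        (doubleCoset B g).ncard = 9
        ∧ {x ∈ doubleCoset B g | orderOf x = 2}.ncard = 3
        ∧ {x ∈ doubleCoset B g | orderOf x = 3}.ncard = 6
        ∧ ∀ x ∈ doubleCoset B g, orderOf x = 2 →
            ∀ y : G, (y ∈ doubleCoset B g ∧ orderOf y = 2) ↔ IsConj x y := by
  have hBN' : Disjoint B N := disjoint_iff.mpr hBN
  have hNB : N.IsComplement' B := isComplement'_of_index_eq_card (hidxN.trans hcardB.symm) hBN'.symm
  have hcosets : ∀ g ∉ B,
      (doubleCoset B g).ncard = 9 ∧ (doubleCoset B g ∩ N).ncard = 3 := fun g hg => by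
    obtain ⟨x, hxN, hx1, hgx⟩ := exists_doubleCoset_eq_of_notMem hNB hg
    rw [hgx, ncard_doubleCoset hN hBN' hfpf hxN hx1, ncard_doubleCoset_inter hN hBN' hfpf hxN hx1,
      hcardB]
    exact ⟨rfl, rfl⟩
  refine ⟨?_, fun g hg => ⟨(hcosets g hg).1, ?_, ?_, fun x hx hx2 =>
    mem_doubleCoset_and_orderOf_eq_two_iff_isConj hN hsq hidxN hfpf hBN' hNB hx hx2⟩⟩
  · rw [card_doubleCosets B (by norm_num) fun g hg => (hcosets g hg).1, ← N.card_mul_index,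
      hcardN, hidxN, hcardB]
    omega
  · rw [setOf_mem_doubleCoset_orderOf_eq_two hN hsq hidxN hfpf hg, (hcosets g hg).2]
  · have hsplit := Set.ncard_inter_add_ncard_sdiff_eq_ncard (doubleCoset B g) N
    rw [(hcosets g hg).1, (hcosets g hg).2] at hsplit
    rw [setOf_mem_doubleCoset_orderOf_eq_three hN hsq hidxN hfpf]
    omega

theorem stmt18 {G : Type*} [Group G] [Finite G] (n : ℕ) (hn : 0 < n)
    (N B : Subgroup G) (hN : N.Normal)
    (hsq : ∀ x ∈ N, x ^ 2 = 1) (hcardN : Nat.card N = 2 ^ (2 * n))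
    (hidxN : N.index = 3) (hcardB : Nat.card B = 3) (hBN : B ⊓ N = ⊥)
    (hfpf : ∀ g : G, g ∉ N → ∀ x ∈ N, g * x * g⁻¹ = x → x = 1) :
    Nat.card {S : Set G // ∃ g : G, S = doubleCoset B g} = (2 ^ (2 * n) - 1) / 3 + 1
    ∧ ∀ g : G, g ∉ B →
        (doubleCoset B g).ncard = 9
        ∧ {x ∈ doubleCoset B g | orderOf x = 2}.ncard = 3
        ∧ {x ∈ doubleCoset B g | orderOf x = 3}.ncard = 6
        ∧ ∀ x ∈ doubleCoset B g, orderOf x = 2 →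
            ∀ y : G, (y ∈ doubleCoset B g ∧ orderOf y = 2) ↔ IsConj x y :=
  stmt18_general n N B hN hsq hcardN hidxN hcardB hBN hfpf
end
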